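/- arXiv:2605.27594 — 2 statements merged into one kernel-verified Lean document; each statement's English description precedes it below -/
import Mathlib

section
/- Let P(x) = Σ_{|α| ≤ k} c_α H_α(x) be a polynomial in the normalized Hermite basis on ℝ^d, and define for each multi-index β with |β| ≤ k-1 the vector a_β(P) ∈ ℝ^d with i-th coordinate sqrt(β_i + 1)·c_{β + e_i}. Let M(P) := E_{x ~ N(0, I_d)}[∇P(x) ∇P(x)^⊤]. Then M(P) = Σ_{|β| ≤ k-1} a_β(P) a_β(P)^⊤. Consequently, tr(M(P)^(1/2)) equals the nuclear norm of the matrix A(P) whose columns are the vectors a_β(P). -/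
/-!
Differentiating a Hermite expansion lowers one index, `∂ᵢ H_α = √αᵢ H_{α - eᵢ}`, so `∂ᵢ P` is the
expansion `Σ_β a_β(P)ᵢ H_β` over `|β| ≤ k - 1`. The `H_β` are orthonormal for the standard
Gaussian: by Stein's identity `E[X p] = E[p']` and `He_{n+1} = X He_n - He_n'` one gets
`E[p He_{n+1}] = E[p' He_n]`, hence `E[He_m He_{n+1}] = m E[He_{m-1} He_n]` and
`E[He_m He_n] = δ_{mn} m!`, and the multivariate case factorises over the coordinates. Therefore
`E[∂ᵢ P ∂ⱼ P] = Σ_β a_β(P)ᵢ a_β(P)ⱼ`, i.e. `M(P) = A Aᵀ`, and the two square roots coincide.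
-/

open MeasureTheory ProbabilityTheory

/-- The standard Gaussian measure on `ℝ^d` (as `Fin d → ℝ`). -/
noncomputable def gaussPi (d : ℕ) : Measure (Fin d → ℝ) :=
  Measure.pi fun _ => gaussianReal 0 1

/-- The normalized (probabilists') Hermite polynomial `H_j(t) = He_j(t) / √(j!)`. -/
noncomputable def hermiteNorm (j : ℕ) (t : ℝ) : ℝ :=
  (Polynomial.aeval t (Polynomial.hermite j)) / Real.sqrt (Nat.factorial j)

/-- The normalized multivariate Hermite polynomial `H_α(x) = ∏_i H_{α_i}(x_i)`. -/
noncomputable def hermiteMulti {d : ℕ} (α : Fin d → ℕ) (x : Fin d → ℝ) : ℝ :=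
  ∏ i, hermiteNorm (α i) (x i)

/-- The `i`-th partial derivative of `P : ℝ^d → ℝ`. -/
noncomputable def pgrad {d : ℕ} (P : (Fin d → ℝ) → ℝ) (x : Fin d → ℝ) (i : Fin d) : ℝ :=
  deriv (fun t => P (Function.update x i t)) (x i)

/-- The finite set of multi-indices `α : Fin d → ℕ` with `|α| ≤ k`. -/
noncomputable def multiIdx (d k : ℕ) : Finset (Fin d → ℕ) :=
  ((Finset.univ : Finset (Fin d → Fin (k + 1))).image fun α => fun i => (α i : ℕ)).filter
    fun α => ∑ i, α i ≤ k

/-- The positive semidefinite square root (Mathlib's former `Matrix.PosSemidef.sqrt`). -/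
noncomputable def Matrix.PosSemidef.sqrt {n 𝕜 : Type*} [Fintype n] [DecidableEq n] [RCLike 𝕜]
    [PartialOrder 𝕜] {A : Matrix n n 𝕜} (hA : A.PosSemidef) : Matrix n n 𝕜 :=
  hA.1.eigenvectorUnitary.1 * Matrix.diagonal ((↑) ∘ (Real.sqrt ∘ hA.1.eigenvalues)) *
  (star hA.1.eigenvectorUnitary : Matrix n n 𝕜)

open Polynomial
open scoped NNReal

namespace MeasureTheory

theorem integral_sum_mul_sum_of_orthonormal {Ω ι : Type*} [MeasurableSpace Ω] {μ : Measure Ω}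
    [DecidableEq ι] (s : Finset ι) (f : ι → Ω → ℝ) (u v : ι → ℝ)
    (hint : ∀ i j, Integrable (fun x => f i x * f j x) μ)
    (horth : ∀ i j, ∫ x, f i x * f j x ∂μ = if i = j then 1 else 0) :
    ∫ x, (∑ i ∈ s, u i * f i x) * (∑ j ∈ s, v j * f j x) ∂μ = ∑ i ∈ s, u i * v i := by
  have hexpand (x : Ω) : (∑ i ∈ s, u i * f i x) * (∑ j ∈ s, v j * f j x) =
      ∑ i ∈ s, ∑ j ∈ s, u i * v j * (f i x * f j x) := by
    rw [Finset.sum_mul_sum]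
    exact Finset.sum_congr rfl fun i _ => Finset.sum_congr rfl fun j _ => by ring
  simp_rw [hexpand]
  rw [integral_finsetSum _ fun i _ => integrable_finsetSum _ fun j _ => (hint i j).const_mul _]
  refine Finset.sum_congr rfl fun i hi => ?_
  rw [integral_finsetSum _ fun j _ => (hint i j).const_mul _]
  simp_rw [integral_const_mul, horth, mul_ite, mul_one, mul_zero]
  rw [Finset.sum_ite_eq s i, if_pos hi]

end MeasureTheory

theorem Finset.sum_update_add_apply {ι M : Type*} [Fintype ι] [DecidableEq ι] [AddCommMonoid M]
    (f : ι → M) (i : ι) (b : M) :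
    ∑ l, Function.update f i b l + f i = ∑ l, f l + b := by
  rw [Finset.sum_update_of_mem (Finset.mem_univ i),
    Finset.sum_eq_add_sum_sdiff_singleton_of_mem (Finset.mem_univ i) f]
  abel

namespace Polynomial

theorem derivative_hermite_succ (n : ℕ) :
    derivative (hermite (n + 1)) = (n + 1 : ℤ[X]) * hermite n := by
  induction n with
  | zero => simp
  | succ n ih =>
    rw [hermite_succ (n + 1), derivative_sub, derivative_mul, derivative_X, ih, derivative_mul,
      hermite_succ n]
    simp only [derivative_add, derivative_natCast, derivative_one]
    push_cast
    ring

theorem derivative_hermite (n : ℕ) : derivative (hermite n) = (n : ℤ[X]) * hermite (n - 1) := by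
  cases n with
  | zero => simp
  | succ n => simpa using derivative_hermite_succ n

end Polynomial

namespace ProbabilityTheory

theorem hasDerivAt_gaussianPDFReal (μ : ℝ) (v : ℝ≥0) (x : ℝ) :
    HasDerivAt (gaussianPDFReal μ v) (-((x - μ) / v) * gaussianPDFReal μ v x) x := by
  have h : HasDerivAt (fun y => -(y - μ) ^ 2 / (2 * v)) (-((x - μ) / v)) x :=
    ((((hasDerivAt_id x).sub_const μ).fun_pow 2).fun_neg.div_const (2 * (v : ℝ))).congr_deriv
      (by simp only [id]; ring)
  exact (h.exp.const_mul (√(2 * Real.pi * v))⁻¹).congr_deriv (by rw [gaussianPDFReal]; ring)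

theorem integrable_gaussianReal_iff {μ : ℝ} {v : ℝ≥0} (hv : v ≠ 0) {f : ℝ → ℝ} :
    Integrable f (gaussianReal μ v) ↔ Integrable (fun x => gaussianPDFReal μ v x * f x) := by
  rw [gaussianReal_of_var_ne_zero _ hv, integrable_withDensity_iff_integrable_smul'
    (measurable_gaussianPDF _ _) (ae_of_all _ fun _ => gaussianPDF_lt_top)]
  simp [toReal_gaussianPDF]

variable {R : Type*} [CommRing R] [Algebra R ℝ]

theorem integrable_aeval_gaussianReal (μ : ℝ) (v : ℝ≥0) (p : R[X]) :
    Integrable (fun x => aeval x p) (gaussianReal μ v) := by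
  simp_rw [aeval_eq_sum_range, Algebra.smul_def]
  refine integrable_finsetSum _ fun i _ => (Integrable.const_mul ?_ _)
  exact integrable_pow_of_mem_interior_integrableExpSet (X := id) (by simp) i

theorem integral_aeval_sub_gaussianReal (μ : ℝ) (v : ℝ≥0) (p q : R[X]) :
    ∫ x, aeval x (p - q) ∂(gaussianReal μ v) =
      ∫ x, aeval x p ∂(gaussianReal μ v) - ∫ x, aeval x q ∂(gaussianReal μ v) := by
  simp_rw [map_sub]
  exact integral_sub (integrable_aeval_gaussianReal μ v p) (integrable_aeval_gaussianReal μ v q)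

theorem integral_aeval_X_mul_gaussianReal (p : R[X]) :
    ∫ x, aeval x (X * p) ∂(gaussianReal 0 1) = ∫ x, aeval x (derivative p) ∂(gaussianReal 0 1) := by
  have hint : ∀ q : R[X], Integrable (fun x => gaussianPDFReal 0 1 x * aeval x q) := fun q =>
    (integrable_gaussianReal_iff one_ne_zero).1 (integrable_aeval_gaussianReal 0 1 q)
  have hderiv : ∀ x, HasDerivAt (fun x => gaussianPDFReal 0 1 x * aeval x p)
      (gaussianPDFReal 0 1 x * aeval x (derivative p - X * p)) x := fun x =>
    ((hasDerivAt_gaussianPDFReal 0 1 x).mul (p.hasDerivAt_aeval x)).congr_deriv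
      (by simp only [map_sub, map_mul, aeval_X]; push_cast; ring)
  have h := integral_eq_zero_of_hasDerivAt_of_integrable hderiv (hint _) (hint p)
  have h' : ∫ x, aeval x (derivative p - X * p) ∂(gaussianReal 0 1) = 0 := by
    simpa only [integral_gaussianReal_eq_integral_smul one_ne_zero, smul_eq_mul] using h
  rw [integral_aeval_sub_gaussianReal] at h'
  linarith

theorem integral_aeval_mul_hermite_succ (p : ℤ[X]) (n : ℕ) :
    ∫ x, aeval x (p * hermite (n + 1)) ∂(gaussianReal 0 1) =
      ∫ x, aeval x (derivative p * hermite n) ∂(gaussianReal 0 1) := by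
  have hsucc : p * hermite (n + 1) = X * (p * hermite n) - p * derivative (hermite n) := by
    rw [hermite_succ]; ring
  have hprod : derivative p * hermite n =
      derivative (p * hermite n) - p * derivative (hermite n) := by
    rw [derivative_mul]; ring
  rw [hsucc, hprod, integral_aeval_sub_gaussianReal, integral_aeval_sub_gaussianReal,
    integral_aeval_X_mul_gaussianReal]

theorem integral_aeval_hermite_mul_hermite (m n : ℕ) :
    ∫ x, aeval x (hermite m * hermite n) ∂(gaussianReal 0 1) =
      if m = n then (m.factorial : ℝ) else 0 := by
  induction n generalizing m with
  | zero =>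
    cases m with
    | zero => simp
    | succ m => rw [mul_comm, integral_aeval_mul_hermite_succ]; simp
  | succ n ih =>
    rw [integral_aeval_mul_hermite_succ, derivative_hermite, mul_assoc]
    have hcast (x : ℝ) : aeval x ((m : ℤ[X]) * (hermite (m - 1) * hermite n)) =
        m * aeval x (hermite (m - 1) * hermite n) := by rw [map_mul, map_natCast]
    simp_rw [hcast]
    rw [integral_const_mul, ih]
    cases m with
    | zero => simp
    | succ m => simp [Nat.factorial_succ]

end ProbabilityTheory

theorem hermiteNorm_mul_hermiteNorm (m n : ℕ) (t : ℝ) :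
    hermiteNorm m t * hermiteNorm n t =
      aeval t (hermite m * hermite n) / (√(m.factorial : ℝ) * √(n.factorial : ℝ)) := by
  rw [hermiteNorm, hermiteNorm, map_mul, div_mul_div_comm]

theorem integrable_hermiteNorm_mul (μ : ℝ) (v : ℝ≥0) (m n : ℕ) :
    Integrable (fun t => hermiteNorm m t * hermiteNorm n t) (gaussianReal μ v) := by
  simp_rw [hermiteNorm_mul_hermiteNorm]
  exact (integrable_aeval_gaussianReal μ v _).div_const _

theorem integral_hermiteNorm_mul (m n : ℕ) :
    ∫ t, hermiteNorm m t * hermiteNorm n t ∂(gaussianReal 0 1) = if m = n then 1 else 0 := by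
  simp_rw [hermiteNorm_mul_hermiteNorm]
  rw [integral_div, integral_aeval_hermite_mul_hermite]
  split_ifs with h
  · subst h
    rw [Real.mul_self_sqrt (Nat.cast_nonneg _), div_self (Nat.cast_ne_zero.2 m.factorial_ne_zero)]
  · exact zero_div _

theorem hasDerivAt_hermiteNorm (n : ℕ) (t : ℝ) :
    HasDerivAt (hermiteNorm n) (√n * hermiteNorm (n - 1) t) t := by
  refine ((hermite n).hasDerivAt_aeval t).div_const _ |>.congr_deriv ?_
  rw [derivative_hermite, map_mul, map_natCast, hermiteNorm]
  cases n with
  | zero => simp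
  | succ n =>
    have hfact : √((n + 1).factorial : ℝ) = √(n + 1 : ℝ) * √(n.factorial : ℝ) := by
      rw [Nat.factorial_succ, Nat.cast_mul, Nat.cast_succ, Real.sqrt_mul (by positivity)]
    have hsq : ((n + 1 : ℕ) : ℝ) = √(n + 1 : ℝ) * √(n + 1 : ℝ) := by
      rw [Real.mul_self_sqrt (by positivity)]; push_cast; ring
    have hpos : 0 < √(n + 1 : ℝ) := by positivity
    rw [hfact, hsq, Nat.add_sub_cancel]
    field_simp
    rw [Real.sqrt_sq hpos.le, mul_comm]

section Multivariate

variable {d : ℕ}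

theorem hermiteMulti_mul_hermiteMulti (β γ : Fin d → ℕ) (x : Fin d → ℝ) :
    hermiteMulti β x * hermiteMulti γ x = ∏ i, hermiteNorm (β i) (x i) * hermiteNorm (γ i) (x i) :=
  Finset.prod_mul_distrib.symm

theorem integrable_hermiteMulti_mul (β γ : Fin d → ℕ) :
    Integrable (fun x => hermiteMulti β x * hermiteMulti γ x) (gaussPi d) := by
  simp_rw [hermiteMulti_mul_hermiteMulti]
  exact Integrable.fintype_prod fun i => integrable_hermiteNorm_mul 0 1 (β i) (γ i)

theorem integral_hermiteMulti_mul (β γ : Fin d → ℕ) :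
    ∫ x, hermiteMulti β x * hermiteMulti γ x ∂(gaussPi d) = if β = γ then 1 else 0 := by
  simp_rw [hermiteMulti_mul_hermiteMulti]
  rw [gaussPi, integral_fintype_prod_eq_prod (fun i t => hermiteNorm (β i) t * hermiteNorm (γ i) t)]
  simp_rw [integral_hermiteNorm_mul]
  simp only [Fintype.prod_boole, funext_iff]
  congr

theorem hermiteMulti_update_point (α : Fin d → ℕ) (x : Fin d → ℝ) (i : Fin d) (t : ℝ) :
    hermiteMulti α (Function.update x i t) =
      hermiteNorm (α i) t * ∏ l ∈ Finset.univ \ {i}, hermiteNorm (α l) (x l) := by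
  rw [hermiteMulti, ← Finset.prod_update_of_mem (Finset.mem_univ i)]
  exact Finset.prod_congr rfl fun l _ => Function.apply_update (fun l => hermiteNorm (α l)) x i t l

theorem hermiteMulti_update_index (α : Fin d → ℕ) (x : Fin d → ℝ) (i : Fin d) (m : ℕ) :
    hermiteMulti (Function.update α i m) x =
      hermiteNorm m (x i) * ∏ l ∈ Finset.univ \ {i}, hermiteNorm (α l) (x l) := by
  rw [hermiteMulti, ← Finset.prod_update_of_mem (Finset.mem_univ i)]
  exact Finset.prod_congr rfl fun l _ =>
    Function.apply_update (fun l n => hermiteNorm n (x l)) α i m l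

theorem hasDerivAt_hermiteMulti_update (α : Fin d → ℕ) (x : Fin d → ℝ) (i : Fin d) :
    HasDerivAt (fun t => hermiteMulti α (Function.update x i t))
      (√(α i) * hermiteMulti (Function.update α i (α i - 1)) x) (x i) := by
  simp_rw [hermiteMulti_update_point, hermiteMulti_update_index, ← mul_assoc]
  exact (hasDerivAt_hermiteNorm (α i) (x i)).mul_const _

theorem pgrad_sum_hermiteMulti (s : Finset (Fin d → ℕ)) (c : (Fin d → ℕ) → ℝ)
    (x : Fin d → ℝ) (i : Fin d) :
    pgrad (fun x => ∑ α ∈ s, c α * hermiteMulti α x) x i =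
      ∑ α ∈ s, c α * (√(α i) * hermiteMulti (Function.update α i (α i - 1)) x) :=
  (HasDerivAt.fun_sum fun α _ => (hasDerivAt_hermiteMulti_update α x i).const_mul (c α)).deriv

end Multivariate

section MultiIndex

variable {d : ℕ}

theorem mem_multiIdx {k : ℕ} {α : Fin d → ℕ} : α ∈ multiIdx d k ↔ ∑ i, α i ≤ k := by
  refine ⟨fun h => (Finset.mem_filter.1 h).2, fun h => Finset.mem_filter.2 ⟨?_, h⟩⟩
  have hlt (i : Fin d) : α i < k + 1 :=
    Nat.lt_succ_of_le <|
      (Finset.single_le_sum (fun _ _ => Nat.zero_le _) (Finset.mem_univ i)).trans h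
  exact Finset.mem_image.2 ⟨fun i => ⟨α i, hlt i⟩, Finset.mem_univ _, rfl⟩

theorem sum_multiIdx_eq_sum_multiIdx_sub_one {M : Type*} [AddCommMonoid M] {k : ℕ} (hk : 1 ≤ k)
    (i : Fin d) (g : (Fin d → ℕ) → M) (hg : ∀ α, α i = 0 → g α = 0) :
    ∑ α ∈ multiIdx d k, g α = ∑ β ∈ multiIdx d (k - 1), g (Function.update β i (β i + 1)) := by
  rw [← Finset.sum_filter_of_ne (p := fun α => α i ≠ 0) fun α _ hα h0 => hα (hg α h0)]
  have hpred (α : Fin d → ℕ) (hα : α i ≠ 0) :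
      Function.update (Function.update α i (α i - 1)) i (α i - 1 + 1) = α := by
    rw [Function.update_idem, Nat.sub_add_cancel (Nat.one_le_iff_ne_zero.2 hα),
      Function.update_eq_self]
  refine Finset.sum_nbij' (fun α => Function.update α i (α i - 1))
    (fun β => Function.update β i (β i + 1)) ?_ ?_ ?_ ?_ ?_
  · intro α hα
    obtain ⟨hαk, hαi⟩ := Finset.mem_filter.1 hα
    have := Finset.sum_update_add_apply α i (α i - 1)
    rw [mem_multiIdx] at hαk ⊢
    omega
  · intro β hβ
    have := Finset.sum_update_add_apply β i (β i + 1)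
    rw [mem_multiIdx] at hβ
    simp only [Finset.mem_filter, mem_multiIdx, Function.update_self]
    omega
  · intro α hα
    simpa using hpred α (Finset.mem_filter.1 hα).2
  · intro β _
    simp
  · intro α hα
    simpa using congrArg g (hpred α (Finset.mem_filter.1 hα).2).symm

end MultiIndex

theorem pgrad_sum_multiIdx {d k : ℕ} (hk : 1 ≤ k) (c : (Fin d → ℕ) → ℝ) (x : Fin d → ℝ)
    (i : Fin d) :
    pgrad (fun x => ∑ α ∈ multiIdx d k, c α * hermiteMulti α x) x i =
      ∑ β ∈ multiIdx d (k - 1),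
        √((β i : ℝ) + 1) * c (Function.update β i (β i + 1)) * hermiteMulti β x := by
  rw [pgrad_sum_hermiteMulti, sum_multiIdx_eq_sum_multiIdx_sub_one hk i _ fun α h => by simp [h]]
  refine Finset.sum_congr rfl fun β _ => ?_
  simp only [Function.update_self, Function.update_idem, Nat.add_sub_cancel,
    Function.update_eq_self]
  push_cast
  ring

/-- Nuclear-norm representation of the spectral regularizer: for
`P = Σ_{|α| ≤ k} c_α H_α` and `a_β(P)_i = √(β_i + 1) c_{β + e_i}`, the matrix
`M(P) = E[∇P ∇Pᵀ]` satisfies `M(P) = Σ_{|β| ≤ k-1} a_β a_βᵀ = A Aᵀ` where `A` has columns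
`a_β`, and consequently `tr (M(P)^{1/2}) = tr ((A Aᵀ)^{1/2})`, the nuclear norm of `A`. -/
theorem nuclear_norm_representation {d k : ℕ} (hk : 1 ≤ k)
    (c : (Fin d → ℕ) → ℝ) (P : (Fin d → ℝ) → ℝ)
    (hP : ∀ x : Fin d → ℝ, P x = ∑ α ∈ multiIdx d k, c α * hermiteMulti α x)
    (a : (Fin d → ℕ) → Fin d → ℝ)
    (ha : ∀ (β : Fin d → ℕ) (i : Fin d),
      a β i = Real.sqrt ((β i : ℝ) + 1) * c (Function.update β i (β i + 1)))
    (M : Matrix (Fin d) (Fin d) ℝ)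
    (hMdef : ∀ i j : Fin d, M i j = ∫ x, pgrad P x i * pgrad P x j ∂(gaussPi d))
    (A : Matrix (Fin d) {β // β ∈ multiIdx d (k - 1)} ℝ)
    (hA : ∀ (i : Fin d) (β : {β // β ∈ multiIdx d (k - 1)}), A i β = a β.1 i) :
    (M = ∑ β ∈ multiIdx d (k - 1), Matrix.of (fun i j => a β i * a β j)) ∧
    (∀ (hMps : M.PosSemidef) (hAps : (A * A.transpose).PosSemidef),
      hMps.sqrt.trace = hAps.sqrt.trace) := by
  have hgrad (x : Fin d → ℝ) (i : Fin d) :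
      pgrad P x i = ∑ β ∈ multiIdx d (k - 1), a β i * hermiteMulti β x := by
    simp_rw [show P = _ from funext hP, pgrad_sum_multiIdx hk, ha]
  have hM : M = ∑ β ∈ multiIdx d (k - 1), Matrix.of (fun i j => a β i * a β j) := by
    ext i j
    rw [hMdef, Matrix.sum_apply]
    simp_rw [hgrad, Matrix.of_apply]
    exact integral_sum_mul_sum_of_orthonormal _ _ _ _ integrable_hermiteMulti_mul
      integral_hermiteMulti_mul
  have hMA : M = A * A.transpose := by
    rw [hM]
    ext i j
    simp only [Matrix.sum_apply, Matrix.of_apply, Matrix.mul_apply, Matrix.transpose_apply, hA]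
    exact (Finset.sum_coe_sort _ fun β => a β i * a β j).symm
  refine ⟨hM, fun hMps hAps => ?_⟩
  subst hMA
  rfl
end

section
/- Let q be a real polynomial of degree at most k with |q(x)| ≤ M for all |x| ≤ R. If additionally (2/R)^{2k} · E_{x~N(0,1)}[x^{2k}] ≤ (8k/R²)^k, then E_{x ~ N(0,1)}[q(x)² · 1{|x| > R}] ≤ M² · (8k/R²)^k. In particular, if R = α·sqrt(k) with α² ≥ 16, then E_{x ~ N(0,1)}[q(x)²] ≤ M² · (1 + (8/α²)^k) ≤ 2M². -/
/-!
Chebyshev's extremal property: a polynomial of degree at most `k` bounded by `1` on `[-1, 1]` is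
dominated at every `t ≥ 1` by `T_k(t)`, and the recurrence `T_{k+2} = 2t T_{k+1} - T_k` with
`T_k ≥ 1` gives `T_k(t) ≤ (2t)^k`. Rescaling `[-R, R]` to `[-1, 1]`, we get
`q(x)² ≤ M² (2/R)^{2k} x^{2k}` for `|x| ≥ R`, so the Gaussian tail of `q²` is bounded by the
`2k`-th moment, while `q² ≤ M²` on `[-R, R]`.
-/

open MeasureTheory ProbabilityTheory

namespace Polynomial.Chebyshev

theorem eval_T_real_le_two_mul_pow {x : ℝ} (hx : 1 ≤ x) (n : ℕ) :
    (T ℝ n).eval x ≤ (2 * x) ^ n := by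
  induction n using Nat.twoStepInduction with
  | zero => simp
  | one => simp; linarith
  | more n ih₀ ih₁ =>
    have hT : (T ℝ (n + 2 : ℕ)).eval x
        = 2 * x * (T ℝ (n + 1 : ℕ)).eval x - (T ℝ n).eval x := by
      push_cast; rw [T_add_two]; simp
    have := one_le_eval_T_real n hx
    rw [hT, pow_succ']
    nlinarith

theorem abs_eval_le_mul_eval_T_real {n : ℕ} {P : ℝ[X]} {M x : ℝ} (hPdeg : P.natDegree ≤ n)
    (hPbnd : ∀ y ∈ Set.Icc (-1) 1, |P.eval y| ≤ M) (hx : 1 ≤ x) :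
    |P.eval x| ≤ M * (T ℝ n).eval x := by
  obtain hM | hM := ((abs_nonneg _).trans (hPbnd 0 (by norm_num))).eq_or_lt
  · have hP : P = 0 := eq_zero_of_infinite_isRoot P <|
      (Set.Icc_infinite (by norm_num : (-1 : ℝ) < 1)).mono fun y hy =>
        abs_nonpos_iff.mp (hM ▸ hPbnd y hy)
    simp [hP, ← hM]
  have hle : ∀ Q : ℝ[X], Q.natDegree ≤ n → (∀ y ∈ Set.Icc (-1) 1, |Q.eval y| ≤ M) →
      Q.eval x ≤ M * (T ℝ n).eval x := by
    intro Q hQdeg hQbnd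
    have := eval_iterate_derivative_le_of_forall_abs_le_one (k := 0) (P := Polynomial.C M⁻¹ * Q)
      hx (degree_le_of_natDegree_le ((natDegree_C_mul_le _ _).trans hQdeg)) fun y hy => by
        rw [eval_mul, eval_C, abs_mul, abs_inv, abs_of_pos hM, inv_mul_le_one₀ hM]
        exact hQbnd y hy
    rwa [Function.iterate_zero, id, id, eval_mul, eval_C, inv_mul_le_iff₀ hM] at this
  refine abs_le.mpr ⟨?_, hle P hPdeg hPbnd⟩
  have := hle (-P) ((natDegree_neg P).le.trans hPdeg) fun y hy => by simpa using hPbnd y hy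
  rw [eval_neg] at this
  linarith

end Polynomial.Chebyshev

namespace Polynomial

variable {n : ℕ} {q : ℝ[X]} {R M : ℝ}

theorem abs_eval_le_mul_two_mul_abs_div_pow (hdeg : q.natDegree ≤ n) (hR : 0 < R)
    (hbound : ∀ y, |y| ≤ R → |q.eval y| ≤ M) {x : ℝ} (hx : R ≤ |x|) :
    |q.eval x| ≤ M * (2 * |x| / R) ^ n := by
  have hM : 0 ≤ M := (abs_nonneg _).trans (hbound 0 (by simpa using hR.le))
  have hx₁ : 1 ≤ |x| / R := (one_le_div hR).mpr hx
  obtain ⟨s, hs, hsx⟩ : ∃ s, |s| = R ∧ s * (|x| / R) = x := by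
    rcases abs_choice x with h | h
    · exact ⟨R, abs_of_pos hR, by rw [h]; field_simp⟩
    · exact ⟨-R, by simp [hR.le], by rw [h]; field_simp⟩
  have hdeg' : (q.comp (C s * X)).natDegree ≤ n :=
    natDegree_comp_le.trans (by nlinarith [(natDegree_C_mul_le s X).trans natDegree_X_le])
  have hbound' : ∀ y ∈ Set.Icc (-1) 1, |(q.comp (C s * X)).eval y| ≤ M := fun y hy => by
    rw [eval_comp, eval_mul, eval_C, eval_X]
    refine hbound _ ?_
    rw [abs_mul, hs]
    exact mul_le_of_le_one_right hR.le (abs_le.mpr hy)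
  calc |q.eval x| = |(q.comp (C s * X)).eval (|x| / R)| := by simp [hsx]
    _ ≤ M * (Chebyshev.T ℝ n).eval (|x| / R) :=
        Chebyshev.abs_eval_le_mul_eval_T_real hdeg' hbound' hx₁
    _ ≤ M * (2 * |x| / R) ^ n := by
        rw [mul_div_assoc]
        gcongr
        exact Chebyshev.eval_T_real_le_two_mul_pow hx₁ n

theorem sq_eval_le_of_le_abs (hdeg : q.natDegree ≤ n) (hR : 0 < R)
    (hbound : ∀ y, |y| ≤ R → |q.eval y| ≤ M) {x : ℝ} (hx : R ≤ |x|) :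
    (q.eval x) ^ 2 ≤ M ^ 2 * (2 / R) ^ (2 * n) * x ^ (2 * n) :=
  calc (q.eval x) ^ 2 = |q.eval x| ^ 2 := (sq_abs _).symm
    _ ≤ (M * (2 * |x| / R) ^ n) ^ 2 :=
        pow_le_pow_left₀ (abs_nonneg _) (abs_eval_le_mul_two_mul_abs_div_pow hdeg hR hbound hx) 2
    _ = M ^ 2 * (2 / R) ^ (2 * n) * x ^ (2 * n) := by
        rw [← (even_two_mul n).pow_abs x]
        ring

theorem sq_eval_le_add (hdeg : q.natDegree ≤ n) (hR : 0 < R)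
    (hbound : ∀ y, |y| ≤ R → |q.eval y| ≤ M) (x : ℝ) :
    (q.eval x) ^ 2 ≤ M ^ 2 + M ^ 2 * (2 / R) ^ (2 * n) * x ^ (2 * n) := by
  have hpow : 0 ≤ x ^ (2 * n) := (even_two_mul n).pow_nonneg x
  rcases le_or_gt |x| R with hx | hx
  · have hq : (q.eval x) ^ 2 ≤ M ^ 2 := by
      rw [← sq_abs]
      exact pow_le_pow_left₀ (abs_nonneg _) (hbound x hx) 2
    have : 0 ≤ M ^ 2 * (2 / R) ^ (2 * n) * x ^ (2 * n) := by positivity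
    linarith
  · nlinarith [sq_eval_le_of_le_abs hdeg hR hbound hx.le, sq_nonneg M]

theorem setIntegral_sq_eval_le {μ : Measure ℝ} (hdeg : q.natDegree ≤ n) (hR : 0 < R)
    (hbound : ∀ y, |y| ≤ R → |q.eval y| ≤ M) (hmom : Integrable (fun x => x ^ (2 * n)) μ) :
    ∫ x in {x : ℝ | R < |x|}, (q.eval x) ^ 2 ∂μ
      ≤ M ^ 2 * ((2 / R) ^ (2 * n) * ∫ x, x ^ (2 * n) ∂μ) := by
  have hS : MeasurableSet {x : ℝ | R < |x|} := measurableSet_lt measurable_const measurable_abs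
  have hg := hmom.const_mul (M ^ 2 * (2 / R) ^ (2 * n))
  have hf : IntegrableOn (fun x => (q.eval x) ^ 2) {x : ℝ | R < |x|} μ :=
    hg.integrableOn.mono' (by fun_prop) <| (ae_restrict_iff' hS).mpr <| .of_forall fun x hx => by
      rw [Real.norm_of_nonneg (sq_nonneg _)]
      exact sq_eval_le_of_le_abs hdeg hR hbound hx.le
  calc ∫ x in {x : ℝ | R < |x|}, (q.eval x) ^ 2 ∂μ
      ≤ ∫ x in {x : ℝ | R < |x|}, M ^ 2 * (2 / R) ^ (2 * n) * x ^ (2 * n) ∂μ :=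
        setIntegral_mono_on hf hg.integrableOn hS fun x hx =>
          sq_eval_le_of_le_abs hdeg hR hbound (le_of_lt hx)
    _ ≤ ∫ x, M ^ 2 * (2 / R) ^ (2 * n) * x ^ (2 * n) ∂μ :=
        setIntegral_le_integral hg <| .of_forall fun x => by
          have := (even_two_mul n).pow_nonneg x
          positivity
    _ = M ^ 2 * ((2 / R) ^ (2 * n) * ∫ x, x ^ (2 * n) ∂μ) := by
        rw [integral_const_mul, mul_assoc]

theorem integral_sq_eval_le {μ : Measure ℝ} [IsProbabilityMeasure μ] (hdeg : q.natDegree ≤ n)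
    (hR : 0 < R) (hbound : ∀ y, |y| ≤ R → |q.eval y| ≤ M)
    (hmom : Integrable (fun x => x ^ (2 * n)) μ) :
    ∫ x, (q.eval x) ^ 2 ∂μ ≤ M ^ 2 * (1 + (2 / R) ^ (2 * n) * ∫ x, x ^ (2 * n) ∂μ) := by
  have hg := (integrable_const (M ^ 2)).add (hmom.const_mul (M ^ 2 * (2 / R) ^ (2 * n)))
  have hf : Integrable (fun x => (q.eval x) ^ 2) μ :=
    hg.mono' (by fun_prop) <| .of_forall fun x => by
      rw [Real.norm_of_nonneg (sq_nonneg _)]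
      exact sq_eval_le_add hdeg hR hbound x
  calc ∫ x, (q.eval x) ^ 2 ∂μ
      ≤ ∫ x, M ^ 2 + M ^ 2 * (2 / R) ^ (2 * n) * x ^ (2 * n) ∂μ :=
        integral_mono hf hg (sq_eval_le_add hdeg hR hbound)
    _ = M ^ 2 * (1 + (2 / R) ^ (2 * n) * ∫ x, x ^ (2 * n) ∂μ) := by
        rw [integral_add (integrable_const _) (hmom.const_mul _), integral_const_mul]
        simp only [integral_const, probReal_univ, one_smul]
        ring

end Polynomial

theorem ProbabilityTheory.integrable_pow_gaussianReal (μ : ℝ) (v : NNReal) (n : ℕ) :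
    Integrable (fun x => x ^ n) (gaussianReal μ v) :=
  (memLp_id_gaussianReal n).integrable_norm_pow'.mono' (by fun_prop)
    (.of_forall fun x => by simp)

theorem polynomial_gaussian_tail_general (k : ℕ) (q : Polynomial ℝ)
    (hdeg : q.natDegree ≤ k) (R M : ℝ) (hR : 0 < R)
    (hbound : ∀ x : ℝ, |x| ≤ R → |q.eval x| ≤ M)
    (hmom : (2 / R) ^ (2 * k) * ∫ x, x ^ (2 * k) ∂(gaussianReal 0 1)
      ≤ (8 * k / R ^ 2) ^ k) :
    (∫ x in {x : ℝ | R < |x|}, (q.eval x) ^ 2 ∂(gaussianReal 0 1)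
        ≤ M ^ 2 * (8 * k / R ^ 2) ^ k) ∧
    ∀ α : ℝ, R = α * Real.sqrt k → 16 ≤ α ^ 2 →
      (∫ x, (q.eval x) ^ 2 ∂(gaussianReal 0 1) ≤ M ^ 2 * (1 + (8 / α ^ 2) ^ k)) ∧
      M ^ 2 * (1 + (8 / α ^ 2) ^ k) ≤ 2 * M ^ 2 := by
  have hint := integrable_pow_gaussianReal 0 1 (2 * k)
  refine ⟨(q.setIntegral_sq_eval_le hdeg hR hbound hint).trans (by gcongr),
    fun α hα h16 => ?_⟩
  have hk : (k : ℝ) ≠ 0 := by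
    rintro hk
    simp [hk] at hα
    linarith
  have hα₂ : 0 < α ^ 2 := by linarith
  have hratio : 8 * k / R ^ 2 = 8 / α ^ 2 := by
    rw [hα, mul_pow, Real.sq_sqrt (Nat.cast_nonneg k)]
    field_simp
  have hsmall : (8 / α ^ 2) ^ k ≤ 1 :=
    pow_le_one₀ (by positivity) ((div_le_one hα₂).mpr (by linarith))
  refine ⟨(q.integral_sq_eval_le hdeg hR hbound hint).trans ?_, by nlinarith [sq_nonneg M]⟩
  rw [← hratio]
  gcongr

/-- Gaussian tail bound for polynomials via Chebyshev growth: if `|q| ≤ M` on `[-R, R]` for a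
polynomial `q` of degree at most `k`, and `(2/R)^{2k} E[x^{2k}] ≤ (8k/R²)^k`, then the Gaussian
tail integral of `q²` outside `[-R, R]` is at most `M² (8k/R²)^k`; in particular with
`R = α √k`, `α² ≥ 16`, the full Gaussian integral of `q²` is at most
`M² (1 + (8/α²)^k) ≤ 2 M²`. -/
theorem polynomial_gaussian_tail (k : ℕ) (hk : 1 ≤ k) (q : Polynomial ℝ)
    (hdeg : q.natDegree ≤ k) (R M : ℝ) (hR : 0 < R) (hM : 0 ≤ M)
    (hbound : ∀ x : ℝ, |x| ≤ R → |q.eval x| ≤ M)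
    (hmom : (2 / R) ^ (2 * k) * ∫ x, x ^ (2 * k) ∂(gaussianReal 0 1)
      ≤ (8 * k / R ^ 2) ^ k) :
    (∫ x in {x : ℝ | R < |x|}, (q.eval x) ^ 2 ∂(gaussianReal 0 1)
        ≤ M ^ 2 * (8 * k / R ^ 2) ^ k) ∧
    ∀ α : ℝ, R = α * Real.sqrt k → 16 ≤ α ^ 2 →
      (∫ x, (q.eval x) ^ 2 ∂(gaussianReal 0 1) ≤ M ^ 2 * (1 + (8 / α ^ 2) ^ k)) ∧
      M ^ 2 * (1 + (8 / α ^ 2) ^ k) ≤ 2 * M ^ 2 :=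
  polynomial_gaussian_tail_general k q hdeg R M hR hbound hmom
end
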